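/- Let γ ≥ 1 with γ ∉ ℕ, C ∈ ℝ \ {0}, and define m₊(z,γ) = -C²(2/π) sin(πγ) e^{-iπγ} z^γ for z ∈ ℂ \ [0,∞), where z^γ is defined with branch cut along [0,∞). Then: (i) conj(m₊(z,γ)) = m₊(conj(z),γ) for all z ∈ ℂ \ [0,∞); (ii) for every λ > 0, lim_{ε↓0} Im(m₊(λ + iε, γ)) = C²(2/π) sin²(πγ) λ^γ; (iii) m₊(·,γ) is not a Herglotz function, i.e., it does not map the upper half-plane into itself. -/

import Mathlib

open Filter

/-- The argument of `z` taken in `(0, 2π)` (branch cut along `[0,∞)`). -/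
noncomputable def argCut (z : ℂ) : ℝ :=
  if 0 < Complex.arg z then Complex.arg z else Complex.arg z + 2 * Real.pi

/-- `z^γ = |z|^γ e^{iγ arg z}` with `arg z ∈ (0,2π)` (branch cut along `[0,∞)`). -/
noncomputable def cpowCut (γ : ℝ) (z : ℂ) : ℂ :=
  ((‖z‖ ^ γ : ℝ) : ℂ) * Complex.exp (Complex.I * ((γ * argCut z : ℝ) : ℂ))

/-- The Weyl–Titchmarsh coefficient `m₊(z,γ) = -C²(2/π) sin(πγ) e^{-iπγ} z^γ` of the
strongly singular potential `(γ²-1/4)/x²`. -/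
noncomputable def mPlusSing (C γ : ℝ) (z : ℂ) : ℂ :=
  ((-(C ^ 2) * (2 / Real.pi) * Real.sin (Real.pi * γ) : ℝ) : ℂ) *
    Complex.exp (-Complex.I * ((Real.pi * γ : ℝ) : ℂ)) * cpowCut γ z

/-!
Off the cut, `m₊(z) = K |z|^γ e^{i(γ arg z - πγ)}` with the real constant
`K = -C²(2/π) sin(πγ)` and `arg z ∈ (0, 2π)`. Conjugation replaces `arg z` by `2π - arg z`,
which negates the phase. Along `λ + iε` the argument tends to `0`, so the phase tends to `-πγ`.
At `z = e^{iπ/γ}`, which lies in the upper half-plane because `γ > 1`, the phase is `π - πγ`,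
so `Im m₊(z) = -C²(2/π) sin²(πγ) < 0`.
-/

open Complex Topology
open scoped Real ComplexConjugate

lemma Real.sin_pi_mul_ne_zero {x : ℝ} (hx : ∀ n : ℤ, x ≠ n) : Real.sin (π * x) ≠ 0 := by
  rw [Ne, Real.sin_eq_zero_iff, not_exists]
  intro n hn
  exact hx n (mul_left_cancel₀ Real.pi_ne_zero (by rw [← hn, mul_comm]))

lemma ne_intCast_of_ne_natCast {x : ℝ} (hx : 0 ≤ x) (h : ∀ n : ℕ, x ≠ n) (n : ℤ) : x ≠ n := by
  rintro rfl
  exact h n.toNat (by exact_mod_cast (Int.toNat_of_nonneg (by exact_mod_cast hx)).symm)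

lemma argCut_of_im_pos {z : ℂ} (h : 0 < z.im) : argCut z = arg z :=
  if_pos <| (arg_nonneg_iff.2 h.le).lt_of_ne' fun h0 => h.ne' (arg_eq_zero_iff.1 h0).2

lemma argCut_conj {z : ℂ} (h : arg z ≠ 0) : argCut (conj z) = 2 * π - argCut z := by
  have := neg_pi_lt_arg z
  have := arg_le_pi z
  unfold argCut
  rw [arg_conj]
  split_ifs <;> grind [Real.pi_pos]

lemma mPlusSing_eq_ofReal_mul_exp (C γ : ℝ) (z : ℂ) :
    mPlusSing C γ z =
      ((-(C ^ 2) * (2 / π) * Real.sin (π * γ) * ‖z‖ ^ γ : ℝ) : ℂ) *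
        exp (((γ * argCut z - π * γ : ℝ) : ℂ) * I) := by
  have hexp : exp (((γ * argCut z - π * γ : ℝ) : ℂ) * I) =
      exp (-I * ((π * γ : ℝ) : ℂ)) * exp (I * ((γ * argCut z : ℝ) : ℂ)) := by
    rw [← exp_add]
    push_cast
    ring_nf
  rw [hexp, mPlusSing, cpowCut]
  push_cast
  ring

lemma mPlusSing_conj (C γ : ℝ) {z : ℂ} (h : arg z ≠ 0) :
    conj (mPlusSing C γ z) = mPlusSing C γ (conj z) := by
  rw [mPlusSing_eq_ofReal_mul_exp, mPlusSing_eq_ofReal_mul_exp, map_mul, conj_ofReal,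
    ← exp_conj, map_mul, conj_ofReal, conj_I, norm_conj, argCut_conj h]
  congr 2
  push_cast
  ring

lemma mPlusSing_im_of_im_pos (C γ : ℝ) {z : ℂ} (h : 0 < z.im) :
    (mPlusSing C γ z).im =
      -(C ^ 2) * (2 / π) * Real.sin (π * γ) * ‖z‖ ^ γ * Real.sin (γ * arg z - π * γ) := by
  rw [mPlusSing_eq_ofReal_mul_exp, im_ofReal_mul, exp_ofReal_mul_I_im, argCut_of_im_pos h]

lemma tendsto_mPlusSing_im_ofReal_add_mul_I (C γ : ℝ) {l : ℝ} (hl : 0 < l) :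
    Tendsto (fun ε : ℝ => (mPlusSing C γ ((l : ℂ) + ε * I)).im) (𝓝[>] 0)
      (𝓝 (C ^ 2 * (2 / π) * Real.sin (π * γ) ^ 2 * l ^ γ)) := by
  set f : ℝ → ℂ := fun ε => (l : ℂ) + ε * I
  set g : ℝ → ℝ := fun ε =>
    -(C ^ 2) * (2 / π) * Real.sin (π * γ) * ‖f ε‖ ^ γ * Real.sin (γ * arg (f ε) - π * γ)
  have hf0 : f 0 = l := by simp [f]
  have hf : ContinuousAt f 0 := by fun_prop
  have harg : ContinuousAt (fun ε => arg (f ε)) 0 :=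
    (continuousAt_arg (by simp [hf0, hl])).comp hf
  have hnorm : ContinuousAt (fun ε => ‖f ε‖ ^ γ) 0 :=
    hf.norm.rpow_const (Or.inl (by simp [hf0, hl.ne']))
  have hg : ContinuousAt g 0 := by fun_prop
  have hg0 : g 0 = C ^ 2 * (2 / π) * Real.sin (π * γ) ^ 2 * l ^ γ := by
    simp only [g, hf0, norm_real, Real.norm_eq_abs, abs_of_pos hl, arg_ofReal_of_nonneg hl.le,
      mul_zero, zero_sub, Real.sin_neg]
    ring
  have hmg : (fun ε => (mPlusSing C γ (f ε)).im) =ᶠ[𝓝[>] 0] g := by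
    filter_upwards [self_mem_nhdsWithin] with ε (hε : 0 < ε)
    exact mPlusSing_im_of_im_pos C γ (by simpa [f] using hε)
  rw [← hg0]
  exact (hg.tendsto.mono_left nhdsWithin_le_nhds).congr' hmg.symm

lemma exists_im_pos_mPlusSing_im_eq (C : ℝ) {γ : ℝ} (hγ : 1 < γ) :
    ∃ z : ℂ, 0 < z.im ∧ (mPlusSing C γ z).im = -(C ^ 2 * (2 / π) * Real.sin (π * γ) ^ 2) := by
  have hγ0 : 0 < γ := one_pos.trans hγ
  have hθ : π / γ ∈ Set.Ioo 0 π := ⟨div_pos Real.pi_pos hγ0, div_lt_self Real.pi_pos hγ⟩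
  have harg : arg (exp ((π / γ : ℝ) * I)) = π / γ := by
    rw [arg_exp_mul_I, toIocMod_eq_self]
    constructor <;> linarith [hθ.1, hθ.2]
  have him : 0 < (exp ((π / γ : ℝ) * I)).im := by
    rw [exp_ofReal_mul_I_im]
    exact Real.sin_pos_of_pos_of_lt_pi hθ.1 hθ.2
  refine ⟨_, him, ?_⟩
  rw [mPlusSing_im_of_im_pos C γ him, harg, norm_exp_ofReal_mul_I, Real.one_rpow,
    mul_div_cancel₀ _ hγ0.ne', Real.sin_pi_sub]
  ring

lemma mPlusSing_not_herglotz {C γ : ℝ} (hC : C ≠ 0) (hγ : 1 < γ) (hs : Real.sin (π * γ) ≠ 0) :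
    ¬ ∀ z : ℂ, 0 < z.im → 0 < (mPlusSing C γ z).im := by
  intro h
  obtain ⟨z, hz, hmz⟩ := exists_im_pos_mPlusSing_im_eq C hγ
  have hpos := h z hz
  rw [hmz] at hpos
  have : 0 < C ^ 2 * (2 / π) * Real.sin (π * γ) ^ 2 := by positivity
  linarith

/-- For `γ ≥ 1`, `γ ∉ ℕ`, `C ≠ 0`: (i) `m₊` is symmetric under conjugation off
`[0,∞)`; (ii) its boundary imaginary part is `C²(2/π) sin²(πγ) λ^γ` for `λ > 0`;
(iii) `m₊` is not a Herglotz function. -/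
theorem mPlusSing_properties (C γ : ℝ) (hγ : 1 ≤ γ) (hnat : ∀ n : ℕ, γ ≠ n)
    (hC : C ≠ 0) :
    (∀ z : ℂ, z ∉ (fun t : ℝ => (t : ℂ)) '' Set.Ici 0 →
      starRingEnd ℂ (mPlusSing C γ z) = mPlusSing C γ (starRingEnd ℂ z)) ∧
    (∀ l : ℝ, 0 < l →
      Tendsto (fun ε : ℝ => (mPlusSing C γ ((l : ℂ) + ε * Complex.I)).im)
        (nhdsWithin 0 (Set.Ioi 0))
        (nhds (C ^ 2 * (2 / Real.pi) * Real.sin (Real.pi * γ) ^ 2 * l ^ γ))) ∧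
    ¬ (∀ z : ℂ, 0 < z.im → 0 < (mPlusSing C γ z).im) := by
  refine ⟨fun z hz => mPlusSing_conj C γ fun h0 => hz ?_,
    fun l hl => tendsto_mPlusSing_im_ofReal_add_mul_I C γ hl,
    mPlusSing_not_herglotz hC (hγ.lt_of_ne fun h => hnat 1 (by simp [← h]))
      (Real.sin_pi_mul_ne_zero (ne_intCast_of_ne_natCast (zero_le_one.trans hγ) hnat))⟩
  obtain ⟨hre, him⟩ := arg_eq_zero_iff.1 h0
  exact ⟨z.re, hre, ext rfl him.symm⟩
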